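/- Let λ, μ ∈ ℝ with μ ≠ 0 and λ + 2μ ≠ 0, α = (λ+μ)/(λ+2μ), and let ∂A_i^j/∂ξ_k = (1/(8πμ))·[α R_k δ_{ij}/R^3 − (2−α)(R_i δ_{jk} + R_j δ_{ik})/R^3 + 3(2−α) R_i R_j R_k/R^5], where R1, R2, R3 ∈ ℝ are not all zero and R = sqrt(R1^2+R2^2+R3^2). Then, summing over n = 1,2,3, the contracted quantity satisfies Σ_n ∂A_i^n/∂ξ_n = −(1/(4π(λ+2μ)))·R_i/R^3 for each i, and consequently, with λ̃ = λ+4μ, (λ̃ + λ)·Σ_n ∂A_i^n/∂ξ_n = −(1/(2π))·R_i/R^3. -/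

import Mathlib

open scoped BigOperators

/-- The source-derivative of the A-image kernel,
`∂A_i^j/∂ξ_k = (1/(8πμ))·[α R_k δ_{ij}/R³ − (2−α)(R_i δ_{jk} + R_j δ_{ik})/R³
  + 3(2−α) R_i R_j R_k/R⁵]`, with `α = (λ+μ)/(λ+2μ)`. -/
noncomputable def dAimage (lam mu : ℝ) (i j k : Fin 3) (R1 R2 R3 : ℝ) : ℝ :=
  let α := (lam + mu) / (lam + 2 * mu)
  let R := Real.sqrt (R1 ^ 2 + R2 ^ 2 + R3 ^ 2)
  let Rv : Fin 3 → ℝ := ![R1, R2, R3]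
  let δ : Fin 3 → Fin 3 → ℝ := fun a b => if a = b then 1 else 0
  1 / (8 * Real.pi * mu) *
    (α * Rv k * δ i j / R ^ 3
      - (2 - α) * (Rv i * δ j k + Rv j * δ i k) / R ^ 3
      + 3 * (2 - α) * Rv i * Rv j * Rv k / R ^ 5)

lemma dAimage_sum_zero (lam mu : ℝ) (hmu : mu ≠ 0) (h2 : lam + 2 * mu ≠ 0)
    (R1 R2 R3 : ℝ) (hR : ¬(R1 = 0 ∧ R2 = 0 ∧ R3 = 0))
    (R : ℝ) (hRdef : R = Real.sqrt (R1 ^ 2 + R2 ^ 2 + R3 ^ 2)) :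
      (∑ n : Fin 3, dAimage lam mu 0 n n R1 R2 R3)
          = -(1 / (4 * Real.pi * (lam + 2 * mu))) * R1 / R ^ 3 := by
  have hs : 0 < R1 ^ 2 + R2 ^ 2 + R3 ^ 2 := by
    rcases not_and_or.mp hR with h | h
    · positivity
    · rcases not_and_or.mp h with h | h <;> positivity
  have hRpos : 0 < R := hRdef ▸ Real.sqrt_pos.mpr hs
  have hR2 : R ^ 2 = R1 ^ 2 + R2 ^ 2 + R3 ^ 2 := by
    rw [hRdef]; exact Real.sq_sqrt hs.le
  have hR3 : R ^ 3 ≠ 0 := pow_ne_zero _ hRpos.ne'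
  have h5 : R ^ 5 = R ^ 3 * (R1 ^ 2 + R2 ^ 2 + R3 ^ 2) := by
    rw [show (5:ℕ) = 3 + 2 from rfl, pow_add, hR2]
  have hpi : Real.pi ≠ 0 := Real.pi_ne_zero
  simp only [dAimage, Fin.sum_univ_three, ← hRdef, h5, Matrix.cons_val_zero,
    Matrix.cons_val_one, Matrix.head_cons, Matrix.cons_val_two, Matrix.tail_cons,
    show ((0:Fin 3) = 1) = False by simp, show ((0:Fin 3) = 2) = False by simp,
    show ((1:Fin 3) = 0) = False by simp, show ((1:Fin 3) = 2) = False by simp,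
    show ((2:Fin 3) = 0) = False by simp, show ((2:Fin 3) = 1) = False by simp,
    if_true, if_false, if_pos rfl]
  field_simp
  have h2m : lam + mu * 2 ≠ 0 := by rwa [mul_comm] at h2
  field_simp
  ring

lemma dAimage_sum_one (lam mu : ℝ) (hmu : mu ≠ 0) (h2 : lam + 2 * mu ≠ 0)
    (R1 R2 R3 : ℝ) (hR : ¬(R1 = 0 ∧ R2 = 0 ∧ R3 = 0))
    (R : ℝ) (hRdef : R = Real.sqrt (R1 ^ 2 + R2 ^ 2 + R3 ^ 2)) :
      (∑ n : Fin 3, dAimage lam mu 1 n n R1 R2 R3)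
          = -(1 / (4 * Real.pi * (lam + 2 * mu))) * R2 / R ^ 3 := by
  have hs : 0 < R1 ^ 2 + R2 ^ 2 + R3 ^ 2 := by
    rcases not_and_or.mp hR with h | h
    · positivity
    · rcases not_and_or.mp h with h | h <;> positivity
  have hRpos : 0 < R := hRdef ▸ Real.sqrt_pos.mpr hs
  have hR2 : R ^ 2 = R1 ^ 2 + R2 ^ 2 + R3 ^ 2 := by
    rw [hRdef]; exact Real.sq_sqrt hs.le
  have hR3 : R ^ 3 ≠ 0 := pow_ne_zero _ hRpos.ne'
  have h5 : R ^ 5 = R ^ 3 * (R1 ^ 2 + R2 ^ 2 + R3 ^ 2) := by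
    rw [show (5:ℕ) = 3 + 2 from rfl, pow_add, hR2]
  have hpi : Real.pi ≠ 0 := Real.pi_ne_zero
  simp only [dAimage, Fin.sum_univ_three, ← hRdef, h5, Matrix.cons_val_zero,
    Matrix.cons_val_one, Matrix.head_cons, Matrix.cons_val_two, Matrix.tail_cons,
    show ((0:Fin 3) = 1) = False by simp, show ((0:Fin 3) = 2) = False by simp,
    show ((1:Fin 3) = 0) = False by simp, show ((1:Fin 3) = 2) = False by simp,
    show ((2:Fin 3) = 0) = False by simp, show ((2:Fin 3) = 1) = False by simp,
    if_true, if_false, if_pos rfl]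
  field_simp
  have h2m : lam + mu * 2 ≠ 0 := by rwa [mul_comm] at h2
  field_simp
  ring

lemma dAimage_sum_two (lam mu : ℝ) (hmu : mu ≠ 0) (h2 : lam + 2 * mu ≠ 0)
    (R1 R2 R3 : ℝ) (hR : ¬(R1 = 0 ∧ R2 = 0 ∧ R3 = 0))
    (R : ℝ) (hRdef : R = Real.sqrt (R1 ^ 2 + R2 ^ 2 + R3 ^ 2)) :
      (∑ n : Fin 3, dAimage lam mu 2 n n R1 R2 R3)
          = -(1 / (4 * Real.pi * (lam + 2 * mu))) * R3 / R ^ 3 := by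
  have hs : 0 < R1 ^ 2 + R2 ^ 2 + R3 ^ 2 := by
    rcases not_and_or.mp hR with h | h
    · positivity
    · rcases not_and_or.mp h with h | h <;> positivity
  have hRpos : 0 < R := hRdef ▸ Real.sqrt_pos.mpr hs
  have hR2 : R ^ 2 = R1 ^ 2 + R2 ^ 2 + R3 ^ 2 := by
    rw [hRdef]; exact Real.sq_sqrt hs.le
  have hR3 : R ^ 3 ≠ 0 := pow_ne_zero _ hRpos.ne'
  have h5 : R ^ 5 = R ^ 3 * (R1 ^ 2 + R2 ^ 2 + R3 ^ 2) := by
    rw [show (5:ℕ) = 3 + 2 from rfl, pow_add, hR2]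
  have hpi : Real.pi ≠ 0 := Real.pi_ne_zero
  simp only [dAimage, Fin.sum_univ_three, ← hRdef, h5, Matrix.cons_val_zero,
    Matrix.cons_val_one, Matrix.head_cons, Matrix.cons_val_two, Matrix.tail_cons,
    show ((0:Fin 3) = 1) = False by simp, show ((0:Fin 3) = 2) = False by simp,
    show ((1:Fin 3) = 0) = False by simp, show ((1:Fin 3) = 2) = False by simp,
    show ((2:Fin 3) = 0) = False by simp, show ((2:Fin 3) = 1) = False by simp,
    if_true, if_false, if_pos rfl]
  field_simp
  have h2m : lam + mu * 2 ≠ 0 := by rwa [mul_comm] at h2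
  field_simp
  ring

/-- The contracted source-derivative of the A-image kernel satisfies
`Σ_n ∂A_i^n/∂ξ_n = −(1/(4π(λ+2μ)))·R_i/R³`, and consequently, with `λ̃ = λ+4μ`,
`(λ̃+λ)·Σ_n ∂A_i^n/∂ξ_n = −(1/(2π))·R_i/R³`. -/
theorem dAimage_contraction (lam mu : ℝ) (hmu : mu ≠ 0) (h2 : lam + 2 * mu ≠ 0)
    (R1 R2 R3 : ℝ) (hR : ¬(R1 = 0 ∧ R2 = 0 ∧ R3 = 0))
    (R : ℝ) (hRdef : R = Real.sqrt (R1 ^ 2 + R2 ^ 2 + R3 ^ 2)) :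
    ∀ i : Fin 3,
      (∑ n : Fin 3, dAimage lam mu i n n R1 R2 R3)
          = -(1 / (4 * Real.pi * (lam + 2 * mu))) * ![R1, R2, R3] i / R ^ 3 ∧
      ((lam + 4 * mu) + lam) * (∑ n : Fin 3, dAimage lam mu i n n R1 R2 R3)
          = -(1 / (2 * Real.pi)) * ![R1, R2, R3] i / R ^ 3 := by
  have hs : 0 < R1 ^ 2 + R2 ^ 2 + R3 ^ 2 := by
    rcases not_and_or.mp hR with h | h
    · positivity
    · rcases not_and_or.mp h with h | h <;> positivity
  have hRpos : 0 < R := hRdef ▸ Real.sqrt_pos.mpr hs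
  have hR3 : R ^ 3 ≠ 0 := pow_ne_zero _ hRpos.ne'
  have hpi : Real.pi ≠ 0 := Real.pi_ne_zero
  have key : ∀ x : ℝ, ((lam + 4 * mu) + lam) *
      (-(1 / (4 * Real.pi * (lam + 2 * mu))) * x / R ^ 3)
        = -(1 / (2 * Real.pi)) * x / R ^ 3 := by
    intro x; field_simp
    have h2m : lam + mu * 2 ≠ 0 := by rwa [mul_comm] at h2
    field_simp
    ring
  have h0 := dAimage_sum_zero lam mu hmu h2 R1 R2 R3 hR R hRdef
  have h1 := dAimage_sum_one lam mu hmu h2 R1 R2 R3 hR R hRdef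
  have h2' := dAimage_sum_two lam mu hmu h2 R1 R2 R3 hR R hRdef
  intro i
  fin_cases i
  · exact ⟨h0, by
      show ((lam + 4 * mu) + lam) * (∑ n : Fin 3, dAimage lam mu 0 n n R1 R2 R3)
          = -(1 / (2 * Real.pi)) * R1 / R ^ 3
      rw [h0]; exact key R1⟩
  · exact ⟨h1, by
      show ((lam + 4 * mu) + lam) * (∑ n : Fin 3, dAimage lam mu 1 n n R1 R2 R3)
          = -(1 / (2 * Real.pi)) * R2 / R ^ 3
      rw [h1]; exact key R2⟩
  · exact ⟨h2', by
      show ((lam + 4 * mu) + lam) * (∑ n : Fin 3, dAimage lam mu 2 n n R1 R2 R3)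
          = -(1 / (2 * Real.pi)) * R3 / R ^ 3
      rw [h2']; exact key R3⟩
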